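/- Let κ ≥ ℵ₀ be a cardinal. Then every completely metrizable topological space of weight κ embeds as a closed subspace of the countable Cartesian power (MJ(κ))^ℕ of the metric hedgehog with κ spines (with the product topology); i.e., it is homeomorphic to a closed subset of (MJ(κ))^ℕ. -/

import Mathlib

open Set Topology Cardinal

universe u v

/-- The equivalence relation on `[0,1] × I` identifying all points with first coordinate `0`. -/
def hedgehogSetoid (I : Type u) : Setoid (Set.Icc (0:ℝ) 1 × I) where
  r p q := ((p.1 : ℝ) = 0 ∧ (q.1 : ℝ) = 0) ∨ p = q
  iseqv := by
    refine ⟨fun p => Or.inr rfl, ?_, ?_⟩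
    · rintro p q (⟨h1, h2⟩ | rfl)
      · exact Or.inl ⟨h2, h1⟩
      · exact Or.inr rfl
    · rintro p q r (⟨h1, h2⟩ | rfl) hqr
      · rcases hqr with ⟨h3, h4⟩ | rfl
        · exact Or.inl ⟨h1, h4⟩
        · exact Or.inl ⟨h1, h2⟩
      · exact hqr

/-- The hedgehog with spines indexed by `I`, as a set (quotient of `[0,1] × I`). -/
abbrev Hedgehog (I : Type u) := Quotient (hedgehogSetoid I)

/-- The product topology on `[0,1] × I`, where `[0,1]` carries the usual topology and
`I` carries the discrete topology. -/
def hedgehogBaseTop (I : Type u) : TopologicalSpace (Set.Icc (0:ℝ) 1 × I) :=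
  @instTopologicalSpaceProd _ _ inferInstance ⊥

/-- The quotient topology on the hedgehog: the quotient hedgehog `J(κ)`. -/
def quotHedgehogTop (I : Type u) : TopologicalSpace (Hedgehog I) :=
  TopologicalSpace.coinduced (Quotient.mk (hedgehogSetoid I)) (hedgehogBaseTop I)

/-- The projection `π_κ : J(κ) → [0,1]`, sending `(t, j)` to `t`. -/
def hedgehogPiKappa {I : Type u} : Hedgehog I → Set.Icc (0:ℝ) 1 :=
  Quotient.lift Prod.fst (by
    rintro p q (⟨h1, h2⟩ | rfl)
    · exact Subtype.ext (h1.trans h2.symm)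
    · rfl)

open Classical in
/-- The projection `π_i : J(κ) → [0,1]`, sending `(t, j)` to `t` if `j = i` and to `0`
otherwise. -/
noncomputable def hedgehogProj {I : Type u} (i : I) : Hedgehog I → Set.Icc (0:ℝ) 1 :=
  Quotient.lift (fun p => if p.2 = i then p.1 else ⟨0, by norm_num⟩) (by
    rintro p q (⟨h1, h2⟩ | rfl)
    · have hp : p.1 = (⟨0, by norm_num⟩ : Set.Icc (0:ℝ) 1) := Subtype.ext h1
      have hq : q.1 = (⟨0, by norm_num⟩ : Set.Icc (0:ℝ) 1) := Subtype.ext h2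
      try dsimp only
      split_ifs <;> simp [hp, hq]
    · rfl)

open Classical in
/-- The hedgehog metric: `d((t,i),(s,j)) = |t - s|` if `i = j` and `t + s` otherwise.
(It is defined via representatives; the formula does not depend on the choice of
representatives.) -/
noncomputable def hedgehogDist {I : Type u} (x y : Hedgehog I) : ℝ :=
  if x.out.2 = y.out.2 then |(x.out.1 : ℝ) - (y.out.1 : ℝ)|
  else (x.out.1 : ℝ) + (y.out.1 : ℝ)

/-- The metric hedgehog `MJ(κ)`: the hedgehog equipped with the hedgehog metric. -/
noncomputable def metricHedgehog (I : Type u) : MetricSpace (Hedgehog I) where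
  dist := hedgehogDist
  dist_self := by
    intro x
    show hedgehogDist x x = 0
    unfold hedgehogDist
    rw [if_pos rfl, sub_self, abs_zero]
  dist_comm := by
    intro x y
    show hedgehogDist x y = hedgehogDist y x
    unfold hedgehogDist
    rcases eq_or_ne x.out.2 y.out.2 with h | h
    · rw [if_pos h, if_pos h.symm, abs_sub_comm]
    · rw [if_neg h, if_neg (Ne.symm h), add_comm]
  dist_triangle := by
    intro x y z
    show hedgehogDist x z ≤ hedgehogDist x y + hedgehogDist y z
    unfold hedgehogDist
    have hx0 : (0:ℝ) ≤ x.out.1 := x.out.1.2.1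
    have hy0 : (0:ℝ) ≤ y.out.1 := y.out.1.2.1
    have hz0 : (0:ℝ) ≤ z.out.1 := z.out.1.2.1
    have hxy : |(x.out.1:ℝ) - y.out.1| ≤ (x.out.1:ℝ) + y.out.1 :=
      abs_le.mpr ⟨by linarith, by linarith⟩
    have hyz : |(y.out.1:ℝ) - z.out.1| ≤ (y.out.1:ℝ) + z.out.1 :=
      abs_le.mpr ⟨by linarith, by linarith⟩
    have hxz : |(x.out.1:ℝ) - z.out.1| ≤ (x.out.1:ℝ) + z.out.1 :=
      abs_le.mpr ⟨by linarith, by linarith⟩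
    have htri := abs_sub_le (x.out.1:ℝ) (y.out.1:ℝ) (z.out.1:ℝ)
    have h1 := le_abs_self ((x.out.1:ℝ) - y.out.1)
    have h2 := neg_abs_le ((x.out.1:ℝ) - y.out.1)
    have h3 := le_abs_self ((y.out.1:ℝ) - z.out.1)
    have h4 := neg_abs_le ((y.out.1:ℝ) - z.out.1)
    split_ifs <;> try linarith
    all_goals simp_all
  eq_of_dist_eq_zero := by
    intro x y h
    replace h : hedgehogDist x y = 0 := h
    unfold hedgehogDist at h
    have hx0 : (0:ℝ) ≤ x.out.1 := x.out.1.2.1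
    have hy0 : (0:ℝ) ≤ y.out.1 := y.out.1.2.1
    rw [← Quotient.out_eq x, ← Quotient.out_eq y]
    split_ifs at h with hc
    · have h1 : (x.out.1:ℝ) = y.out.1 := by
        have := abs_eq_zero.mp h
        linarith
      have : x.out = y.out := Prod.ext (Subtype.ext h1) hc
      rw [this]
    · exact Quotient.sound (Or.inl ⟨by linarith, by linarith⟩)

/-- The topology of the metric hedgehog `MJ(κ)`. -/
noncomputable def metricHedgehogTop (I : Type u) : TopologicalSpace (Hedgehog I) :=
  (metricHedgehog I).toUniformSpace.toTopologicalSpace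

/-- The bijection `Φ` from the hedgehog onto the axes `L(κ)` of the cube `[0,1]^I`,
viewed as a map into the cube: `Φ(t,i)(j) = t` if `j = i` and `0` otherwise. -/
noncomputable def hedgehogPhi {I : Type u} : Hedgehog I → (I → Set.Icc (0:ℝ) 1) :=
  fun x j => hedgehogProj j x

/-- The topology of the compact hedgehog `ΛJ(κ)`: the topology transported along `Φ`
from the subspace `L(κ)` of the Tychonoff cube `[0,1]^I`, i.e. the topology induced by `Φ`
from the product topology. -/
noncomputable def compactHedgehogTop (I : Type u) : TopologicalSpace (Hedgehog I) :=
  TopologicalSpace.induced hedgehogPhi inferInstance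

/-- The weight of a topological space: the minimum cardinality of a basis of its topology. -/
noncomputable def weight (X : Type u) [TopologicalSpace X] : Cardinal.{u} :=
  sInf { c : Cardinal.{u} | ∃ B : Set (Set X), TopologicalSpace.IsTopologicalBasis B ∧ #B = c }

/-- A family `A` of subsets of a topological space is discrete if every point has a
neighborhood meeting `A i` for at most one index `i`. -/
def IsDiscreteFamily {X : Type*} [TopologicalSpace X] {ι : Type*} (A : ι → Set X) : Prop :=
  ∀ x : X, ∃ N ∈ nhds x, { i | (A i ∩ N).Nonempty }.Subsingleton

/-- A set-indexed family of subsets of a topological space is discrete if every point has a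
neighborhood meeting at most one member of the family. -/
def IsDiscreteSetFamily {X : Type*} [TopologicalSpace X] (𝒜 : Set (Set X)) : Prop :=
  ∀ x : X, ∃ N ∈ nhds x, { A ∈ 𝒜 | (A ∩ N).Nonempty }.Subsingleton

/-- A topological space `X` is `κ`-collectionwise normal if every discrete family of closed
sets indexed by a set of cardinality `κ` can be separated by a pairwise disjoint family of
open sets. -/
def IsCollectionwiseNormalWrt (κ : Cardinal.{u}) (X : Type v) [TopologicalSpace X] : Prop :=
  ∀ (ι : Type u) (F : ι → Set X), #ι = κ → (∀ i, IsClosed (F i)) → IsDiscreteFamily F →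
    ∃ U : ι → Set X, (∀ i, IsOpen (U i)) ∧ (Pairwise fun i j => Disjoint (U i) (U j)) ∧
      ∀ i, F i ⊆ U i

/-- A topological space is completely metrizable if its topology is induced by some
complete metric. -/
def IsCompletelyMetrizable (X : Type*) [t : TopologicalSpace X] : Prop :=
  ∃ m : MetricSpace X, m.toUniformSpace.toTopologicalSpace = t ∧
    @CompleteSpace X m.toUniformSpace

/-!
Kowalsky's construction. For each `n`, cover `X` by the `1/(n+1)`-balls around a dense set
indexed by `I`, and refine this cover into countably many discrete open families (Stone's
theorem, via Rudin's cells). A discrete open family `V` indexed by `I` gives a continuous spine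
map `X → MJ(I)`, sending a point of `V i` out along the spine `i` to its distance from `(V i)ᶜ`;
countably many of them separate points from closed sets, hence embed `X` into `MJ(I)^(ℕ × ℕ)`.

To close the image, let `Uₙ` be the open set of points where the oscillation of `f⁻¹` is below
`1/(n+1)`. By completeness, a limit point of `range f` lying in every `Uₙ` is in `range f`.
Adjoin the coordinates `φ (1 / dist (f x) Uₙᶜ)`, where `φ : ℝ → MJ(I)²` has no cluster point at
infinity: two copies of a snake running along spines `z 0, z 1, …`, half a period apart, so that
one of them is always at height `≥ 1/2` on a spine far out. These coordinates cannot converge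
at a limit point outside some `Uₙ`.
-/

attribute [local instance] metricHedgehog

namespace Hedgehog

variable {I : Type u}

open Classical in
noncomputable def repDist (p q : Set.Icc (0:ℝ) 1 × I) : ℝ :=
  if p.2 = q.2 then |(p.1 : ℝ) - q.1| else p.1 + q.1

lemma repDist_comm (p q : Set.Icc (0:ℝ) 1 × I) : repDist p q = repDist q p := by
  unfold repDist
  rcases eq_or_ne p.2 q.2 with h | h
  · rw [if_pos h, if_pos h.symm, abs_sub_comm]
  · rw [if_neg h, if_neg (Ne.symm h), add_comm]

lemma repDist_of_fst_eq_zero {p : Set.Icc (0:ℝ) 1 × I} (hp : (p.1 : ℝ) = 0)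
    (q : Set.Icc (0:ℝ) 1 × I) : repDist p q = q.1 := by
  have := q.1.2.1
  unfold repDist
  split_ifs <;> simp [hp, abs_of_nonneg this]

lemma repDist_congr_left {p p' : Set.Icc (0:ℝ) 1 × I} (h : hedgehogSetoid I p p')
    (q : Set.Icc (0:ℝ) 1 × I) : repDist p q = repDist p' q := by
  rcases h with ⟨hp, hp'⟩ | rfl
  · rw [repDist_of_fst_eq_zero hp, repDist_of_fst_eq_zero hp']
  · rfl

lemma dist_mk (p q : Set.Icc (0:ℝ) 1 × I) :
    dist (⟦p⟧ : Hedgehog I) ⟦q⟧ = repDist p q := by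
  change repDist ⟦p⟧.out ⟦q⟧.out = _
  rw [repDist_congr_left (Quotient.mk_out (s := hedgehogSetoid I) p), repDist_comm,
    repDist_congr_left (Quotient.mk_out (s := hedgehogSetoid I) q), repDist_comm]

lemma dist_mk_same (t s : Set.Icc (0:ℝ) 1) (i : I) :
    dist (⟦(t, i)⟧ : Hedgehog I) ⟦(s, i)⟧ = |(t : ℝ) - s| := by
  simp [dist_mk, repDist]

lemma dist_mk_le (p q : Set.Icc (0:ℝ) 1 × I) : dist (⟦p⟧ : Hedgehog I) ⟦q⟧ ≤ p.1 + q.1 := by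
  rw [dist_mk, repDist]
  split_ifs
  · exact (abs_sub _ _).trans (by rw [abs_of_nonneg p.1.2.1, abs_of_nonneg q.1.2.1])
  · rfl

lemma isometry_mk (i : I) : Isometry fun t : Set.Icc (0:ℝ) 1 => (⟦(t, i)⟧ : Hedgehog I) :=
  Isometry.of_dist_eq fun t s => by rw [dist_mk_same, Subtype.dist_eq, Real.dist_eq]

open Classical in
lemma hedgehogProj_mk (i : I) (p : Set.Icc (0:ℝ) 1 × I) :
    hedgehogProj i (⟦p⟧ : Hedgehog I) = if p.2 = i then p.1 else ⟨0, by norm_num⟩ := rfl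

lemma le_dist_of_hedgehogProj_eq_zero {i : I} {y : Hedgehog I}
    (hy : (hedgehogProj i y : ℝ) = 0) (t : Set.Icc (0:ℝ) 1) :
    (t : ℝ) ≤ dist (⟦(t, i)⟧ : Hedgehog I) y := by
  induction y using Quotient.ind with
  | _ p =>
    by_cases h : p.2 = i
    · rw [hedgehogProj_mk, if_pos h] at hy
      rw [dist_mk, repDist, if_pos h.symm, hy, sub_zero]
      exact le_abs_self _
    · rw [dist_mk, repDist, if_neg (Ne.symm h)]
      exact le_add_of_nonneg_right p.1.2.1

lemma eventually_hedgehogProj_eq_zero (y : Hedgehog I) :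
    ∀ᶠ i in Filter.cofinite, (hedgehogProj i y : ℝ) = 0 := by
  induction y using Quotient.ind with
  | _ p =>
    refine (Set.finite_singleton p.2).subset fun i hi => ?_
    by_contra h
    exact hi (show (hedgehogProj i ⟦p⟧ : ℝ) = 0 by rw [hedgehogProj_mk, if_neg (Ne.symm h)])

end Hedgehog

section Snake

open Filter Hedgehog

variable {I : Type*}

noncomputable def snakeHeight (t : ℝ) : ℝ := 1 - 2 * |t - round t|

lemma snakeHeight_mem_Icc (t : ℝ) : snakeHeight t ∈ Icc (0:ℝ) 1 := by
  have := abs_sub_round t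
  have := abs_nonneg (t - round t)
  constructor <;> unfold snakeHeight <;> linarith

lemma snakeHeight_add_le {t s : ℝ} (h : round t < round s) :
    snakeHeight t + snakeHeight s ≤ 2 * (s - t) := by
  have hts : (round t : ℝ) + 1 ≤ round s := by exact_mod_cast h
  have := le_abs_self (t - round t)
  have := neg_abs_le (s - round s)
  unfold snakeHeight
  linarith

lemma abs_snakeHeight_sub_le {t s : ℝ} (h : round t = round s) :
    |snakeHeight t - snakeHeight s| ≤ 2 * |t - s| := by
  have := abs_abs_sub_abs_le_abs_sub (s - round s) (t - round t)
  rw [show s - round s - (t - round t) = s - t by rw [h]; ring, abs_sub_comm s t] at this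
  rw [snakeHeight, snakeHeight, show 1 - 2 * |t - round t| - (1 - 2 * |s - round s|)
    = 2 * (|s - round s| - |t - round t|) by ring, abs_mul, abs_two]
  linarith

lemma one_le_snakeHeight_add_snakeHeight_add_half (t : ℝ) :
    1 ≤ snakeHeight t + snakeHeight (t + 1 / 2) := by
  have hr := abs_sub_round t
  rw [abs_le] at hr
  unfold snakeHeight
  rcases le_total (round t : ℝ) t with h | h
  · have := round_le (t + 1 / 2) (round t + 1)
    rw [Int.cast_add, Int.cast_one, abs_of_nonpos (by linarith : t + 1 / 2 - (round t + 1) ≤ 0)]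
      at this
    rw [abs_of_nonneg (sub_nonneg.2 h)]
    linarith
  · have := round_le (t + 1 / 2) (round t)
    rw [abs_of_nonneg (by linarith : 0 ≤ t + 1 / 2 - round t)] at this
    rw [abs_of_nonpos (sub_nonpos.2 h)]
    linarith

/-- Runs out to the tip of the spine `z m` at time `m`, and back to the center at `m ± 1/2`. -/
noncomputable def snake (z : ℤ → I) (t : ℝ) : Hedgehog I :=
  ⟦(⟨snakeHeight t, snakeHeight_mem_Icc t⟩, z (round t))⟧

lemma lipschitzWith_snake (z : ℤ → I) : LipschitzWith 2 (snake z) := by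
  have key : ∀ t s, round t < round s → dist (snake z t) (snake z s) ≤ 2 * dist t s :=
    fun t s h => calc
      _ ≤ snakeHeight t + snakeHeight s := dist_mk_le _ _
      _ ≤ 2 * (s - t) := snakeHeight_add_le h
      _ ≤ 2 * dist t s := by rw [dist_comm, Real.dist_eq]; gcongr; exact le_abs_self _
  refine LipschitzWith.of_dist_le_mul fun t s => ?_
  rw [NNReal.coe_ofNat]
  rcases lt_trichotomy (round t) (round s) with h | h | h
  · exact key t s h
  · rw [snake, snake, h, dist_mk_same, Real.dist_eq]
    exact abs_snakeHeight_sub_le h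
  · rw [dist_comm, dist_comm t]
    exact key s t h

lemma tendsto_round_atTop : Tendsto (fun t : ℝ => round t) atTop atTop := by
  simp_rw [round_eq]
  exact tendsto_floor_atTop.comp (tendsto_atTop_add_const_right _ _ tendsto_id)

lemma eventually_one_le_dist_snake_add_dist_snake {z : ℤ → I} (hz : Function.Injective z)
    (p q : Hedgehog I) :
    ∀ᶠ t in atTop, 1 ≤ dist (snake z t) p + dist (snake z (t + 1 / 2)) q := by
  have hspine : Tendsto (fun t => z (round t)) atTop cofinite :=
    hz.tendsto_cofinite.comp (tendsto_round_atTop.mono_right atTop_le_cofinite)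
  have hp := hspine.eventually (eventually_hedgehogProj_eq_zero p)
  have hq := (hspine.comp (tendsto_atTop_add_const_right _ (1 / 2) tendsto_id)).eventually
    (eventually_hedgehogProj_eq_zero q)
  filter_upwards [hp, hq] with t hpt hqt
  calc 1 ≤ snakeHeight t + snakeHeight (t + 1 / 2) :=
        one_le_snakeHeight_add_snakeHeight_add_half t
    _ ≤ _ := add_le_add (le_dist_of_hedgehogProj_eq_zero hpt ⟨_, snakeHeight_mem_Icc _⟩)
        (le_dist_of_hedgehogProj_eq_zero hqt ⟨_, snakeHeight_mem_Icc _⟩)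

noncomputable def snakePair (z : ℤ → I) (t : ℝ) : Fin 2 → Hedgehog I :=
  ![snake z t, snake z (t + 1 / 2)]

lemma continuous_snakePair (z : ℤ → I) : Continuous (snakePair z) := by
  have := (lipschitzWith_snake z).continuous
  refine continuous_pi fun k => ?_
  fin_cases k
  · exact this
  · exact this.comp (continuous_add_const _)

lemma disjoint_map_snakePair_atTop_nhds {z : ℤ → I} (hz : Function.Injective z)
    (w : Fin 2 → Hedgehog I) : Disjoint (map (snakePair z) atTop) (𝓝 w) := by
  refine disjoint_of_disjoint_of_mem (s := {v | 1 / 2 ≤ dist v w}) (t := Metric.ball w (1 / 2))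
    (Set.disjoint_left.2 fun v hv hv' => (not_le.2 (Metric.mem_ball.1 hv')) hv) ?_
    (Metric.ball_mem_nhds w one_half_pos)
  refine mem_map.2 ?_
  filter_upwards [eventually_one_le_dist_snake_add_dist_snake hz (w 0) (w 1)] with t ht
  have h0 : dist (snake z t) (w 0) ≤ dist (snakePair z t) w :=
    dist_le_pi_dist (snakePair z t) w 0
  have h1 : dist (snake z (t + 1 / 2)) (w 1) ≤ dist (snakePair z t) w :=
    dist_le_pi_dist (snakePair z t) w 1
  show 1 / 2 ≤ dist (snakePair z t) w
  linarith

end Snake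

lemma IsDiscreteFamily.eq_of_mem_of_mem {X ι : Type*} [TopologicalSpace X] {A : ι → Set X}
    (hA : IsDiscreteFamily A) {x : X} {i j : ι} (hi : x ∈ A i) (hj : x ∈ A j) : i = j := by
  obtain ⟨N, hN, hsub⟩ := hA x
  exact hsub ⟨x, hi, mem_of_mem_nhds hN⟩ ⟨x, hj, mem_of_mem_nhds hN⟩

section SpineMap

open Metric Hedgehog

variable {X : Type*} [MetricSpace X] {I : Type u}

open Classical in
/-- The case `V = univ` is separate because `infDist x ∅ = 0`. -/
noncomputable def bump (V : Set X) (x : X) : ℝ := if V = Set.univ then 1 else min 1 (infDist x Vᶜ)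

lemma bump_mem_Icc (V : Set X) (x : X) : bump V x ∈ Icc (0:ℝ) 1 := by
  unfold bump
  split_ifs
  · exact right_mem_Icc.2 zero_le_one
  · exact ⟨le_min zero_le_one infDist_nonneg, min_le_left _ _⟩

lemma continuous_bump (V : Set X) : Continuous (bump V) := by
  unfold bump
  split_ifs
  · exact continuous_const
  · exact continuous_const.min (continuous_infDist_pt _)

lemma bump_pos {V : Set X} (hV : IsOpen V) {x : X} (hx : x ∈ V) : 0 < bump V x := by
  unfold bump
  split_ifs with h
  · exact one_pos
  · exact lt_min one_pos <| (hV.isClosed_compl.notMem_iff_infDist_pos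
      (nonempty_compl.2 h)).1 (not_not.2 hx)

lemma bump_eq_zero {V : Set X} {x : X} (hx : x ∉ V) : bump V x = 0 := by
  unfold bump
  split_ifs with h
  · exact absurd (h ▸ mem_univ x) hx
  · rw [infDist_zero_of_mem (show x ∈ Vᶜ from hx), min_eq_right zero_le_one]

/-- Meant for pairwise disjoint `V`: a point of `V i` goes to height `bump (V i) x` on the
spine `i`, a point outside `⋃ i, V i` to the center. -/
noncomputable def spineMap [Nonempty I] (V : I → Set X) (x : X) : Hedgehog I :=
  let i := Classical.epsilon (fun i => x ∈ V i)
  Quotient.mk _ (⟨bump (V i) x, bump_mem_Icc _ _⟩, i)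

variable [Nonempty I] {V : I → Set X}

lemma spineMap_eq {x : X} {i : I} (h : ∀ k ≠ i, x ∉ V k) :
    spineMap V x = ⟦(⟨bump (V i) x, bump_mem_Icc _ _⟩, i)⟧ := by
  set e := Classical.epsilon (fun i => x ∈ V i)
  by_cases hei : e = i
  · simp only [spineMap, e, ← hei]
  have hxe : x ∉ V e := h e hei
  have hxi : x ∉ V i := fun hxi => hxe (Classical.epsilon_spec (p := fun k => x ∈ V k) ⟨i, hxi⟩)
  exact Quotient.sound (Or.inl ⟨bump_eq_zero hxe, bump_eq_zero hxi⟩)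

lemma hedgehogProj_spineMap {x : X} {i : I} (hx : x ∉ V i) :
    (hedgehogProj i (spineMap V x) : ℝ) = 0 := by
  classical
  simp only [spineMap, hedgehogProj_mk]
  split_ifs with h
  · exact bump_eq_zero (h ▸ hx)
  · rfl

lemma continuous_spineMap (hV : IsDiscreteFamily V) : Continuous (spineMap V) := by
  refine continuous_iff_continuousAt.2 fun x => ?_
  obtain ⟨N, hN, hsub⟩ := hV x
  obtain ⟨i, hi⟩ : ∃ i, ∀ y ∈ N, ∀ k ≠ i, y ∉ V k := by
    by_cases h : ∃ i, (V i ∩ N).Nonempty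
    · obtain ⟨i, hi⟩ := h
      exact ⟨i, fun y hy k hk hyk => hk (hsub ⟨y, hyk, hy⟩ hi)⟩
    · exact ⟨Classical.arbitrary I, fun y hy k _ hyk => h ⟨k, y, hyk, hy⟩⟩
  have hcont : Continuous fun y => (⟦(⟨bump (V i) y, bump_mem_Icc _ _⟩, i)⟧ : Hedgehog I) :=
    (isometry_mk i).continuous.comp ((continuous_bump _).subtype_mk _)
  exact hcont.continuousAt.congr
    (Filter.eventually_of_mem hN fun y hy => (spineMap_eq (hi y hy)).symm)

lemma spineMap_preimage_ball_subset (hV : IsDiscreteFamily V) {x : X} {i : I} (hx : x ∈ V i) :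
    spineMap V ⁻¹' ball (spineMap V x) (bump (V i) x) ⊆ V i := by
  intro y hy
  by_contra hyi
  rw [mem_preimage, mem_ball, dist_comm,
    spineMap_eq fun k hk hxk => hk (hV.eq_of_mem_of_mem hxk hx)] at hy
  exact (le_dist_of_hedgehogProj_eq_zero (hedgehogProj_spineMap hyi) _).not_gt hy

end SpineMap

section Stone

open Metric

variable {X A : Type*} [MetricSpace X] [LinearOrder A] {𝒰 : A → Set X} {ε : ℝ}

/-- The cells of M. E. Rudin's proof of Stone's theorem, without her condition excluding the
earlier cells: that condition only serves local finiteness, not discreteness. -/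
def rudinCell (𝒰 : A → Set X) (ε : ℝ) (a : A) : Set X :=
  ⋃ c ∈ {c | (∀ b < a, c ∉ 𝒰 b) ∧ ball c (3 * ε) ⊆ 𝒰 a}, ball c ε

lemma isOpen_rudinCell (a : A) : IsOpen (rudinCell 𝒰 ε a) :=
  isOpen_biUnion fun _ _ => isOpen_ball

lemma rudinCell_subset (hε : 0 ≤ ε) (a : A) : rudinCell 𝒰 ε a ⊆ 𝒰 a :=
  iUnion₂_subset fun _ hc => (ball_subset_ball (by linarith)).trans hc.2

lemma le_dist_of_mem_rudinCell {a b : A} (hab : a ≠ b) {x y : X} (hx : x ∈ rudinCell 𝒰 ε a)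
    (hy : y ∈ rudinCell 𝒰 ε b) : ε ≤ dist x y := by
  simp only [rudinCell, mem_iUnion, mem_ball, exists_prop] at hx hy
  obtain ⟨c, ⟨hca, hcU⟩, hxc⟩ := hx
  obtain ⟨c', ⟨hc'b, hc'U⟩, hyc'⟩ := hy
  -- Otherwise the center of the later-indexed cell would lie in the earlier member of `𝒰`.
  have hcc' : 3 * ε ≤ dist c c' := by
    by_contra! h
    rcases hab.lt_or_gt with hlt | hlt
    · exact hc'b a hlt (hcU (mem_ball'.2 h))
    · exact hca b hlt (hc'U (mem_ball.2 h))
  have := dist_triangle c x c'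
  have := dist_triangle x y c'
  rw [dist_comm] at hxc
  linarith

lemma isDiscreteFamily_rudinCell (hε : 0 < ε) : IsDiscreteFamily (rudinCell 𝒰 ε) := by
  refine fun x => ⟨ball x (ε / 2), ball_mem_nhds x (half_pos hε), ?_⟩
  rintro a ⟨y, hya, hyx⟩ b ⟨y', hyb, hy'x⟩
  by_contra hab
  have := le_dist_of_mem_rudinCell hab hya hyb
  have := dist_triangle_right y y' x
  rw [mem_ball] at hyx hy'x
  linarith

lemma exists_mem_rudinCell [WellFoundedLT A] (h𝒰 : ∀ a, IsOpen (𝒰 a)) {x : X}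
    (hx : ∃ a, x ∈ 𝒰 a) : ∃ n : ℕ, ∃ a, x ∈ rudinCell 𝒰 (1 / (n + 1)) a := by
  obtain ⟨a, hxa, hmin⟩ := WellFounded.has_min wellFounded_lt {a | x ∈ 𝒰 a} hx
  obtain ⟨r, hr, hrU⟩ := isOpen_iff.1 (h𝒰 a) x hxa
  obtain ⟨n, hn⟩ := exists_nat_one_div_lt (div_pos hr three_pos)
  refine ⟨n, a, mem_biUnion ⟨fun b hb hxb => hmin b hxb hb, ?_⟩ (mem_ball_self (by positivity))⟩
  exact (ball_subset_ball (by linarith)).trans hrU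

end Stone

theorem exists_isDiscreteFamily_refinement {X A : Type*} [MetricSpace X] (𝒰 : A → Set X)
    (h𝒰 : ∀ a, IsOpen (𝒰 a)) (hcov : ∀ x, ∃ a, x ∈ 𝒰 a) :
    ∃ V : ℕ → A → Set X, (∀ n a, IsOpen (V n a)) ∧ (∀ n a, V n a ⊆ 𝒰 a) ∧
      (∀ n, IsDiscreteFamily (V n)) ∧ ∀ x, ∃ n a, x ∈ V n a := by
  obtain ⟨_, _⟩ := exists_wellFoundedLT A
  exact ⟨fun n => rudinCell 𝒰 (1 / (n + 1)), fun _ => isOpen_rudinCell,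
    fun _ => rudinCell_subset (by positivity), fun _ => isDiscreteFamily_rudinCell (by positivity),
    fun x => exists_mem_rudinCell h𝒰 (hcov x)⟩

theorem exists_denseRange_of_weight_le {X I : Type u} [TopologicalSpace X] [Nonempty X]
    (hw : weight X ≤ #I) : ∃ c : I → X, DenseRange c := by
  obtain ⟨B, hB, hBw⟩ : ∃ B : Set (Set X), TopologicalSpace.IsTopologicalBasis B ∧ #B = weight X :=
    csInf_mem (s := {c | ∃ B : Set (Set X), TopologicalSpace.IsTopologicalBasis B ∧ #B = c})
      ⟨_, _, TopologicalSpace.isTopologicalBasis_opens, rfl⟩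
  obtain ⟨e⟩ : Nonempty (B ↪ I) := (Cardinal.le_def _ _).1 (hBw.trans_le hw)
  have : Nonempty B := by
    obtain ⟨s, hs, -⟩ := sUnion_eq_univ_iff.1 hB.sUnion_eq (Classical.arbitrary X)
    exact ⟨⟨s, hs⟩⟩
  refine ⟨fun i => Classical.epsilon (· ∈ (Function.invFun e i).1), ?_⟩
  refine hB.dense_iff.2 fun s hs hne => ?_
  obtain ⟨i, hi⟩ := Function.invFun_surjective e.injective ⟨s, hs⟩
  refine ⟨_, ?_, mem_range_self i⟩
  exact hi ▸ Classical.epsilon_spec (p := (· ∈ ((⟨s, hs⟩ : B) : Set X))) hne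

lemma isInducing_pi_of_forall_nhds {X ι : Type*} {Y : ι → Type*} [TopologicalSpace X]
    [∀ i, TopologicalSpace (Y i)] {f : ∀ i, X → Y i} (hf : ∀ i, Continuous (f i))
    (hsep : ∀ x, ∀ U ∈ 𝓝 x, ∃ i, ∃ N ∈ 𝓝 (f i x), f i ⁻¹' N ⊆ U) :
    IsInducing fun x i => f i x := by
  refine isInducing_iff_nhds.2 fun x => le_antisymm ((continuous_pi hf).tendsto x).le_comap ?_
  intro U hU
  obtain ⟨i, N, hN, hNU⟩ := hsep x U hU
  exact ⟨_, (continuous_apply i).continuousAt.preimage_mem_nhds hN, hNU⟩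

open Metric in
theorem exists_isEmbedding_pi_hedgehog {X I : Type*} [MetricSpace X] [Nonempty I] {c : I → X}
    (hc : DenseRange c) : ∃ f : X → ℕ × ℕ → Hedgehog I, IsEmbedding f := by
  choose V hVo hVsub hVd hVcov using fun n : ℕ =>
    exists_isDiscreteFamily_refinement (fun i => ball (c i) (1 / (n + 1))) (fun _ => isOpen_ball)
      fun x => (hc.exists_dist_lt x (by positivity : (0:ℝ) < 1 / (n + 1))).imp
        fun _ h => mem_ball.2 h
  refine ⟨fun x p => spineMap (V p.1 p.2) x, (isInducing_pi_of_forall_nhds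
    (fun p : ℕ × ℕ => continuous_spineMap (hVd p.1 p.2)) ?_).isEmbedding⟩
  intro x U hU
  obtain ⟨r, hr, hrU⟩ := Metric.mem_nhds_iff.1 hU
  obtain ⟨n, hn⟩ := exists_nat_one_div_lt (half_pos hr)
  obtain ⟨m, i, hx⟩ := hVcov n x
  refine ⟨(n, m), _, ball_mem_nhds _ (bump_pos (hVo n m i) hx),
    (spineMap_preimage_ball_subset (hVd n m) hx).trans fun y hy => hrU ?_⟩
  have hyc := hVsub n m i hy
  have hxc := hVsub n m i hx
  rw [mem_ball] at hyc hxc ⊢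
  have := dist_triangle_right y x (c i)
  linarith

section ClosedEmbedding

open Metric Filter

variable {X Y : Type*} [MetricSpace X] [TopologicalSpace Y]

/-- The set where the oscillation of `f⁻¹` is below `ε`. -/
def invOscLt (f : X → Y) (ε : ℝ) : Set Y :=
  ⋃₀ {W | IsOpen W ∧ ∀ a ∈ f ⁻¹' W, ∀ b ∈ f ⁻¹' W, dist a b < ε}

lemma isOpen_invOscLt (f : X → Y) (ε : ℝ) : IsOpen (invOscLt f ε) :=
  isOpen_sUnion fun _ hW => hW.1

lemma Topology.IsInducing.mem_invOscLt {f : X → Y} (hf : IsInducing f) {ε : ℝ} (hε : 0 < ε)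
    (x : X) : f x ∈ invOscLt f ε := by
  obtain ⟨W, hWo, hW⟩ := hf.isOpen_iff.1 (isOpen_ball (x := x) (ε := ε / 2))
  refine ⟨W, ⟨hWo, fun a ha b hb => ?_⟩, ?_⟩
  · rw [hW, mem_ball] at ha hb
    linarith [dist_triangle_right a b x]
  · show x ∈ f ⁻¹' W
    rw [hW]
    exact mem_ball_self (half_pos hε)

lemma cauchy_of_tendsto_of_forall_mem_invOscLt {f : X → Y} {l : Filter X} [l.NeBot] {y : Y}
    (hfy : Tendsto f l (𝓝 y)) (hy : ∀ n : ℕ, y ∈ invOscLt f (1 / (n + 1))) : Cauchy l := by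
  refine Metric.cauchy_iff.2 ⟨‹_›, fun ε hε => ?_⟩
  obtain ⟨n, hn⟩ := exists_nat_one_div_lt hε
  obtain ⟨W, ⟨hWo, hW⟩, hyW⟩ := hy n
  exact ⟨f ⁻¹' W, hfy (hWo.mem_nhds hyW), fun a ha b hb => (hW a ha b hb).trans hn⟩

end ClosedEmbedding

section Escape

open Metric Filter

variable {α Y : Type*} [PseudoMetricSpace Y] {U : Set Y}

lemma continuous_inv_infDist_compl [TopologicalSpace α] (hU : IsOpen U) {g : α → Y}
    (hg : Continuous g) (hgU : ∀ a, g a ∈ U) : Continuous fun a => (infDist (g a) Uᶜ)⁻¹ := by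
  rcases Uᶜ.eq_empty_or_nonempty with h | h
  · simp only [h, infDist_empty, inv_zero]
    exact continuous_const
  · exact ((continuous_infDist_pt _).comp hg).inv₀ fun a =>
      ((hU.isClosed_compl.notMem_iff_infDist_pos h).1 (not_not.2 (hgU a))).ne'

lemma tendsto_inv_infDist_compl_atTop (hU : IsOpen U) {y : Y} (hy : y ∉ U) {g : α → Y}
    {l : Filter α} (hg : Tendsto g l (𝓝 y)) (hgU : ∀ᶠ a in l, g a ∈ U) :
    Tendsto (fun a => (infDist (g a) Uᶜ)⁻¹) l atTop := by
  refine tendsto_inv_nhdsGT_zero.comp (tendsto_nhdsWithin_iff.2 ⟨?_, ?_⟩)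
  · have h := ((continuous_infDist_pt Uᶜ).tendsto y).comp hg
    rwa [infDist_zero_of_mem (show y ∈ Uᶜ from hy)] at h
  · filter_upwards [hgU] with a ha
    exact (hU.isClosed_compl.notMem_iff_infDist_pos ⟨y, hy⟩).1 (not_not.2 ha)

end Escape

open Metric Filter in
theorem exists_isClosedEmbedding_prod_pi {X Y Z : Type*} [MetricSpace X] [CompleteSpace X]
    [TopologicalSpace Y] [TopologicalSpace.MetrizableSpace Y] [TopologicalSpace Z] [T2Space Z]
    {f : X → Y} (hf : IsEmbedding f) {φ : ℝ → Z} (hφ : Continuous φ)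
    (hφ_far : ∀ w, Disjoint (map φ atTop) (𝓝 w)) :
    ∃ g : X → ℕ → Z, IsClosedEmbedding fun x => (f x, g x) := by
  let := TopologicalSpace.metrizableSpaceMetric Y
  set U : ℕ → Set Y := fun n => invOscLt f (1 / (n + 1))
  have hfU : ∀ n x, f x ∈ U n := fun n => hf.isInducing.mem_invOscLt (by positivity)
  set g : X → ℕ → Z := fun x n => φ (infDist (f x) (U n)ᶜ)⁻¹
  have hg : Continuous g := continuous_pi fun n =>
    hφ.comp (continuous_inv_infDist_compl (isOpen_invOscLt _ _) hf.continuous (hfU n))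
  refine ⟨g, ⟨.of_comp (hf.continuous.prodMk hg) continuous_fst hf, ?_⟩⟩
  rw [← closure_subset_iff_isClosed]
  rintro ⟨y, w⟩ hyw
  set l := comap (fun x => (f x, g x)) (𝓝 (y, w))
  have : l.NeBot := comap_neBot fun t ht => by
    obtain ⟨_, ht, x, rfl⟩ := mem_closure_iff_nhds.1 hyw t ht
    exact ⟨x, ht⟩
  have hl : Tendsto (fun x => (f x, g x)) l (𝓝 (y, w)) := tendsto_comap
  have hfy : Tendsto f l (𝓝 y) := (continuous_fst.tendsto _).comp hl
  have hgw : Tendsto g l (𝓝 w) := (continuous_snd.tendsto _).comp hl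
  have hyU : ∀ n, y ∈ U n := fun n => by
    by_contra hy
    have hesc := tendsto_inv_infDist_compl_atTop (isOpen_invOscLt _ _) hy hfy
      (Eventually.of_forall (hfU n))
    exact (tendsto_map.comp hesc).not_tendsto (hφ_far (w n))
      (((continuous_apply n).tendsto w).comp hgw)
  obtain ⟨x, hx⟩ := CompleteSpace.complete (cauchy_of_tendsto_of_forall_mem_invOscLt hfy hyU)
  exact ⟨x, tendsto_nhds_unique (((hf.continuous.prodMk hg).tendsto x).mono_left hx) hl⟩

theorem exists_isClosedEmbedding_pi_nat {X H α : Type*} [TopologicalSpace X] [TopologicalSpace H]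
    [Countable α] [Infinite α] {F : X → α → H} (hF : IsClosedEmbedding F) :
    ∃ f : X → ℕ → H, IsClosedEmbedding f := by
  obtain ⟨_⟩ := nonempty_denumerable α
  exact ⟨_, (Homeomorph.piCongrLeft (Denumerable.eqv α)).isClosedEmbedding.comp hF⟩

/-- For `κ ≥ ℵ₀`, every completely metrizable space of weight `κ` embeds as a closed
subspace of the countable Cartesian power `(MJ(κ))^ℕ` of the metric hedgehog. -/
theorem completelyMetrizable_closed_embedding (κ : Cardinal.{u}) (hκ : Cardinal.aleph0 ≤ κ)
    (I : Type u) (hI : #I = κ) (X : Type u) [TopologicalSpace X]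
    (hX : IsCompletelyMetrizable X) (hw : weight X = κ) :
    letI : TopologicalSpace (Hedgehog I) := metricHedgehogTop I
    ∃ f : X → (ℕ → Hedgehog I), IsEmbedding f ∧ IsClosed (Set.range f) := by
  obtain ⟨m, rfl, hcomplete⟩ := hX
  rcases isEmpty_or_nonempty X with _ | _
  · exact ⟨isEmptyElim, .of_subsingleton _, by rw [range_eq_empty]; exact isClosed_empty⟩
  have : Infinite I := Cardinal.infinite_iff.2 (hI ▸ hκ)
  obtain ⟨c, hc⟩ := exists_denseRange_of_weight_le (hw.trans hI.symm).le
  obtain ⟨f, hf⟩ := exists_isEmbedding_pi_hedgehog hc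
  let z : ℤ ↪ I := Equiv.intEquivNat.toEmbedding.trans (Infinite.natEmbedding I)
  obtain ⟨g, hg⟩ := exists_isClosedEmbedding_prod_pi hf (continuous_snakePair z)
    (disjoint_map_snakePair_atTop_nhds z.injective)
  obtain ⟨F, hF⟩ := exists_isClosedEmbedding_pi_nat <|
    ((Homeomorph.prodCongr (.refl _) Homeomorph.piCurry.symm).trans
      Homeomorph.sumArrowHomeomorphProdArrow.symm).isClosedEmbedding.comp hg
  exact ⟨F, hF.isEmbedding, hF.isClosed_range⟩
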